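/- arXiv:2210.12822 — 2 statements merged into one kernel-verified Lean document; each statement's English description precedes it below -/
import Mathlib

section
/- Let p be a prime and let ℤ_(p) denote the localization of ℤ at the prime p (rationals with denominator prime to p). Then evaluation at 1 defines a group isomorphism Hom(ℤ_(p), ℚ_p/ℤ_p) ≅ ℚ_p/ℤ_p. Moreover every homomorphism φ : ℤ_(p) → ℚ_p/ℤ_p is annihilated by some power of p (p^r · φ = 0 for some r), so that the natural map colim_r Hom(ℤ/p^r, ℚ_p/ℤ_p) → Hom(ℤ_(p), ℚ_p/ℤ_p), induced by the quotient maps ℤ_(p) → ℤ/p^r, is a bijection. -/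
/-- The `p`-primary part `ℚ_p/ℤ_p` of `ℚ/ℤ = AddCircle (1 : ℚ)`. -/
def pPrimaryPart (p : ℕ) : AddSubgroup (AddCircle (1 : ℚ)) where
  carrier := {x | ∃ r : ℕ, p ^ r • x = 0}
  zero_mem' := ⟨0, smul_zero _⟩
  add_mem' := by
    rintro a b ⟨r, hr⟩ ⟨s, hs⟩
    refine ⟨r + s, ?_⟩
    have ha : (p ^ (r + s)) • a = 0 := by
      rw [pow_add, mul_comm, ← smul_smul, hr, smul_zero]
    have hb : (p ^ (r + s)) • b = 0 := by
      rw [pow_add, ← smul_smul, hs, smul_zero]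
    rw [smul_add, ha, hb, add_zero]
  neg_mem' := by
    rintro a ⟨r, hr⟩
    exact ⟨r, by rw [smul_neg, hr, neg_zero]⟩

/-- `ℤ_(p) ⊆ ℚ`, the additive group of rationals with denominator prime to `p`. -/
def ZLocal (p : ℕ) (hp : p.Prime) : AddSubgroup ℚ where
  carrier := {q | ¬ p ∣ q.den}
  zero_mem' := by
    simp only [Set.mem_setOf_eq, Rat.den_zero, Nat.dvd_one]
    exact hp.ne_one
  add_mem' := by
    intro a b ha hb h
    rcases (hp.dvd_mul.mp (h.trans (Rat.add_den_dvd a b))) with h' | h'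
    exacts [ha h', hb h']
  neg_mem' := by
    intro a ha
    simpa only [Set.mem_setOf_eq, Rat.den_neg_eq_den] using ha

lemma one_mem_ZLocal (p : ℕ) (hp : p.Prime) : (1 : ℚ) ∈ ZLocal p hp := by
  simp only [ZLocal, AddSubgroup.mem_mk, Set.mem_setOf_eq, Rat.den_one, Nat.dvd_one]
  exact (show ¬ p ∣ (1 : ℚ).den by simp only [Rat.den_one, Nat.dvd_one]; exact hp.ne_one)

/-- The reduction map `ℤ_(p) → ℤ/p^r`, sending `a/b` to `a · b⁻¹ mod p^r`. -/
def ZLocalProj (p : ℕ) (hp : p.Prime) (r : ℕ) (q : ↥(ZLocal p hp)) : ZMod (p ^ r) :=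
  ((q : ℚ).num : ZMod (p ^ r)) * ((q : ℚ).den : ZMod (p ^ r))⁻¹

/-
A homomorphism `φ : ℤ_(p) → ℚ_p/ℤ_p` is determined by `φ 1`: for `q = a / b` with `p ∤ b` we
have `b • φ q = a • φ 1`, and `b` acts injectively on the `p`-power torsion element `φ q`.
If `p ^ r` kills `φ 1`, then `φ` agrees at `1`, hence everywhere, with the reduction
`ℤ_(p) → ℤ_p → ℤ/p^r` followed by `ℤ/p^r → ℚ_p/ℤ_p`, `1 ↦ φ 1`. This gives surjectivity of
evaluation, the annihilation by `p ^ r` and the factorization; the factorization is unique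
because the reduction is surjective.
-/

lemma eq_zero_of_nsmul_eq_zero_of_coprime {A : Type*} [AddMonoid A] {a : A} {m n : ℕ}
    (hmn : m.Coprime n) (hm : m • a = 0) (hn : n • a = 0) : a = 0 :=
  AddMonoid.addOrderOf_eq_one_iff.mp <| Nat.Coprime.eq_one_of_dvd
    (Nat.Coprime.coprime_dvd_left (addOrderOf_dvd_of_nsmul_eq_zero hm) hmn)
    (addOrderOf_dvd_of_nsmul_eq_zero hn)

lemma pPrimaryPart.exists_pow_nsmul_eq_zero {p : ℕ} (y : pPrimaryPart p) :
    ∃ r : ℕ, p ^ r • y = 0 := by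
  obtain ⟨r, hr⟩ := y.2
  exact ⟨r, Subtype.ext hr⟩

def ZMod.addHomOfNsmulEqZero {A : Type*} [AddCommGroup A] {n : ℕ} (a : A) (ha : n • a = 0) :
    ZMod n →+ A :=
  ZMod.lift n ⟨zmultiplesHom A a, by simpa using ha⟩

@[simp]
lemma ZMod.addHomOfNsmulEqZero_intCast {A : Type*} [AddCommGroup A] {n : ℕ} (a : A)
    (ha : n • a = 0) (k : ℤ) : ZMod.addHomOfNsmulEqZero a ha k = k • a := by
  simp [ZMod.addHomOfNsmulEqZero]

namespace ZLocal

lemma den_coprime_pow {p : ℕ} {hp : p.Prime} (q : ZLocal p hp) (r : ℕ) :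
    (q : ℚ).den.Coprime (p ^ r) :=
  (Nat.coprime_comm.mp (hp.coprime_iff_not_dvd.mpr q.2)).pow_right r

section Reduction

variable {p : ℕ} [hp : Fact p.Prime]

noncomputable def toPadicInt : ZLocal p hp.out →+ ℤ_[p] where
  toFun q := ⟨q, Padic.norm_rat_le_one q.2⟩
  map_zero' := PadicInt.ext (by simp)
  map_add' q q' := PadicInt.ext <| by
    simp only [AddSubgroup.coe_add, Rat.cast_add]
    rfl

@[simp]
lemma coe_toPadicInt (q : ZLocal p hp.out) : (toPadicInt q : ℚ_[p]) = ((q : ℚ) : ℚ_[p]) := rfl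

lemma toPadicInt_mul_den (q : ZLocal p hp.out) :
    toPadicInt q * (q : ℚ).den = (q : ℚ).num :=
  PadicInt.ext <| by
    rw [PadicInt.coe_mul, coe_toPadicInt, PadicInt.coe_natCast, PadicInt.coe_intCast]
    exact_mod_cast congrArg ((↑) : ℚ → ℚ_[p]) (q : ℚ).mul_den_eq_num

/-- Reduction modulo `p ^ r`, routed through `ℤ_[p]` so that additivity comes for free. -/
noncomputable def reduce (r : ℕ) : ZLocal p hp.out →+ ZMod (p ^ r) :=
  (PadicInt.toZModPow r).toAddMonoidHom.comp toPadicInt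

lemma isUnit_den (r : ℕ) (q : ZLocal p hp.out) : IsUnit ((q : ℚ).den : ZMod (p ^ r)) :=
  (ZMod.isUnit_iff_coprime _ _).mpr (den_coprime_pow q r)

lemma reduce_eq_zLocalProj (r : ℕ) (q : ZLocal p hp.out) :
    reduce r q = ZLocalProj p hp.out r q := by
  have h := congrArg (PadicInt.toZModPow r) (toPadicInt_mul_den q)
  rw [map_mul, map_natCast, map_intCast] at h
  rw [ZLocalProj, ← h, mul_assoc, ZMod.mul_inv_of_unit _ (isUnit_den r q), mul_one]
  rfl

lemma reduce_one (r : ℕ) : reduce r ⟨1, one_mem_ZLocal p hp.out⟩ = 1 := by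
  simp [reduce_eq_zLocalProj, ZLocalProj]

lemma reduce_surjective (r : ℕ) : Function.Surjective (reduce (p := p) r) := by
  intro x
  obtain ⟨k, rfl⟩ := ZMod.intCast_surjective x
  exact ⟨k • ⟨1, one_mem_ZLocal p hp.out⟩, by simp [reduce_one]⟩

lemma addHomOfNsmulEqZero_comp_reduce_one {A : Type*} [AddCommGroup A] {r : ℕ} (a : A)
    (ha : p ^ r • a = 0) :
    (ZMod.addHomOfNsmulEqZero a ha).comp (reduce r) ⟨1, one_mem_ZLocal p hp.out⟩ = a := by
  rw [AddMonoidHom.comp_apply, reduce_one, ← Int.cast_one, ZMod.addHomOfNsmulEqZero_intCast,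
    one_smul]

end Reduction

variable {p : ℕ} {hp : p.Prime} {A : Type*} [AddCommGroup A]

lemma hom_eq_zero_of_map_one {φ : ZLocal p hp →+ A} (hA : ∀ a : A, ∃ r : ℕ, p ^ r • a = 0)
    (h : φ ⟨1, one_mem_ZLocal p hp⟩ = 0) : φ = 0 := by
  ext q
  obtain ⟨r, hr⟩ := hA (φ q)
  refine eq_zero_of_nsmul_eq_zero_of_coprime (den_coprime_pow q r) ?_ hr
  have hq : (q : ℚ).den • q = (q : ℚ).num • ⟨1, one_mem_ZLocal p hp⟩ := by
    ext; simp
  rw [← map_nsmul, hq, map_zsmul, h, smul_zero]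

lemma hom_ext_of_map_one {φ ψ : ZLocal p hp →+ A} (hA : ∀ a : A, ∃ r : ℕ, p ^ r • a = 0)
    (h : φ ⟨1, one_mem_ZLocal p hp⟩ = ψ ⟨1, one_mem_ZLocal p hp⟩) : φ = ψ :=
  sub_eq_zero.mp <| hom_eq_zero_of_map_one hA <| by rw [AddMonoidHom.sub_apply, h, sub_self]

end ZLocal

/-- Evaluation at `1` is an isomorphism `Hom(ℤ_(p), ℚ_p/ℤ_p) ≅ ℚ_p/ℤ_p`; every
homomorphism `ℤ_(p) → ℚ_p/ℤ_p` is annihilated by a power of `p`; and the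
natural map `colim_r Hom(ℤ/p^r, ℚ_p/ℤ_p) → Hom(ℤ_(p), ℚ_p/ℤ_p)` induced by the
reductions `ℤ_(p) → ℤ/p^r` is a bijection (every homomorphism factors through
some reduction, and the factorization at each level is unique). -/
theorem hom_zLocal_pPrimary (p : ℕ) (hp : p.Prime) :
    Function.Bijective
      (fun φ : ↥(ZLocal p hp) →+ ↥(pPrimaryPart p) => φ ⟨1, one_mem_ZLocal p hp⟩) ∧
    (∀ φ : ↥(ZLocal p hp) →+ ↥(pPrimaryPart p), ∃ r : ℕ, ∀ x, p ^ r • φ x = 0) ∧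
    (∀ φ : ↥(ZLocal p hp) →+ ↥(pPrimaryPart p),
      ∃ (r : ℕ) (ψ : ZMod (p ^ r) →+ ↥(pPrimaryPart p)),
        ∀ x, φ x = ψ (ZLocalProj p hp r x)) ∧
    (∀ (r : ℕ) (ψ ψ' : ZMod (p ^ r) →+ ↥(pPrimaryPart p)),
      (∀ x, ψ (ZLocalProj p hp r x) = ψ' (ZLocalProj p hp r x)) → ψ = ψ') := by
  have : Fact p.Prime := ⟨hp⟩
  have hA := @pPrimaryPart.exists_pow_nsmul_eq_zero p
  refine ⟨⟨fun φ ψ h ↦ ZLocal.hom_ext_of_map_one hA h, fun y ↦ ?_⟩, fun φ ↦ ?_, fun φ ↦ ?_,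
    fun r ψ ψ' h ↦ ?_⟩
  · obtain ⟨r, hr⟩ := hA y
    exact ⟨_, ZLocal.addHomOfNsmulEqZero_comp_reduce_one y hr⟩
  · obtain ⟨r, hr⟩ := hA (φ ⟨1, one_mem_ZLocal p hp⟩)
    have hφ : p ^ r • φ = 0 := ZLocal.hom_eq_zero_of_map_one hA hr
    exact ⟨r, fun x ↦ by rw [← AddMonoidHom.nsmul_apply, hφ, AddMonoidHom.zero_apply]⟩
  · obtain ⟨r, hr⟩ := hA (φ ⟨1, one_mem_ZLocal p hp⟩)
    have hφ := ZLocal.hom_ext_of_map_one hA (ZLocal.addHomOfNsmulEqZero_comp_reduce_one _ hr).symm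
    exact ⟨r, _, fun x ↦ by rw [hφ, AddMonoidHom.comp_apply, ZLocal.reduce_eq_zLocalProj]⟩
  · refine AddMonoidHom.ext fun x ↦ ?_
    obtain ⟨q, rfl⟩ := ZLocal.reduce_surjective r x
    simpa only [ZLocal.reduce_eq_zLocalProj] using h q
end

section
/- Let p be a prime and r ≥ 1. For every function g : ZMod p^r → 𝔽_p there exists a function f : ZMod p^{r+1} → 𝔽_p such that f(x) − f(x + 1) = g(π(x)) for all x ∈ ZMod p^{r+1}, where π : ZMod p^{r+1} → ZMod p^r is the reduction map. (In particular, the operator id − σ is surjective on the colimit over r of functions ZMod p^r → 𝔽_p, i.e. on locally constant functions ℤ_p → 𝔽_p.) -/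
/-- Surjectivity of `id − σ` on locally constant functions `ℤ_p → 𝔽_p`: every
`g : ℤ/p^r → 𝔽_p` can be written as `f(x) − f(x+1)` for some
`f : ℤ/p^{r+1} → 𝔽_p`, where the argument of `g` is reduced modulo `p^r`. -/
theorem shift_coboundary_surjective (p r : ℕ) (hp : p.Prime) (hr : 1 ≤ r)
    (g : ZMod (p ^ r) → ZMod p) :
    ∃ f : ZMod (p ^ (r + 1)) → ZMod p, ∀ x : ZMod (p ^ (r + 1)),
      f x - f (x + 1) =
        g (ZMod.castHom (pow_dvd_pow p (Nat.le_succ r)) (ZMod (p ^ r)) x) := by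
  have hNpos : 0 < p ^ (r + 1) := pow_pos hp.pos _
  haveI : NeZero (p ^ (r + 1)) := ⟨hNpos.ne'⟩
  have key : ∀ k, (∑ j ∈ Finset.range (k * p ^ r), g ((j : ℕ) : ZMod (p ^ r))) =
      k • (∑ j ∈ Finset.range (p ^ r), g ((j : ℕ) : ZMod (p ^ r))) := by
    intro k
    induction k with
    | zero => simp
    | succ k ih =>
      rw [Nat.succ_mul, Finset.sum_range_add, ih, succ_nsmul]
      congr 1
      apply Finset.sum_congr rfl
      intro i _
      congr 1
      rw [Nat.cast_add, Nat.cast_mul, ZMod.natCast_self, mul_zero, zero_add]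
  have total : (∑ j ∈ Finset.range (p ^ (r + 1)), g ((j : ℕ) : ZMod (p ^ r))) = 0 := by
    have hN : p ^ (r + 1) = p * p ^ r := by rw [pow_succ, mul_comm]
    rw [hN, key]
    simp [nsmul_eq_mul, ZMod.natCast_self]
  refine ⟨fun x => -∑ j ∈ Finset.range x.val, g ((j : ℕ) : ZMod (p ^ r)), fun x => ?_⟩
  dsimp only
  have hx : x.val < p ^ (r + 1) := ZMod.val_lt x
  have hcast : (ZMod.castHom (pow_dvd_pow p (Nat.le_succ r)) (ZMod (p ^ r)) x)
      = ((x.val : ℕ) : ZMod (p ^ r)) := by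
    rw [ZMod.castHom_apply, ← ZMod.natCast_val]
  have hx1 : x + 1 = ((x.val + 1 : ℕ) : ZMod (p ^ (r + 1))) := by
    push_cast
    rw [ZMod.natCast_val, ZMod.cast_id]
  by_cases h : x.val + 1 = p ^ (r + 1)
  · have hx10 : x + 1 = 0 := by rw [hx1, h, ZMod.natCast_self]
    rw [hx10, hcast]
    have h2 := total
    rw [← h, Finset.sum_range_succ] at h2
    have h0 : (0 : ZMod (p ^ (r + 1))).val = 0 := ZMod.val_zero
    rw [h0]
    simp only [Finset.range_zero, Finset.sum_empty, neg_zero, sub_zero]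
    linear_combination -h2
  · have hlt : x.val + 1 < p ^ (r + 1) := lt_of_le_of_ne hx h
    have hval : (x + 1).val = x.val + 1 := by
      rw [hx1, ZMod.val_natCast_of_lt hlt]
    rw [hval, hcast, Finset.sum_range_succ]
    ring
end
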